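/- arXiv:1602.02699 — 8 statements merged into one kernel-verified Lean document; each statement's English description precedes it below -/
import Mathlib

section
/- If P(x) = a_0 + a_1 x + ... + a_n x^n is a real polynomial such that every partial sum A_k = a_0 + a_1 + ... + a_k is strictly positive (for k = 0,...,n), then P(x) > 0 for all x in the closed interval [0,1]. -/
lemma abel_aux (a : ℕ → ℝ) (x : ℝ) : ∀ n : ℕ,
    ∑ i ∈ Finset.range (n + 1), a i * x ^ i =
      (∑ k ∈ Finset.range n, (∑ i ∈ Finset.range (k + 1), a i) * (x ^ k - x ^ (k + 1)))
        + (∑ i ∈ Finset.range (n + 1), a i) * x ^ n := by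
  intro n
  induction n with
  | zero => simp
  | succ m ih =>
    rw [Finset.sum_range_succ (f := fun i => a i * x ^ i), ih]
    simp only [Finset.sum_range_succ]
    ring

/-- If every partial sum of the coefficients of a real polynomial
`P(x) = a 0 + a 1 * x + ... + a n * x ^ n` is strictly positive (positive dominance),
then `P > 0` on `[0,1]`. -/
theorem positive_dominant_pos (n : ℕ) (a : ℕ → ℝ)
    (h : ∀ k ≤ n, 0 < ∑ i ∈ Finset.range (k + 1), a i) :
    ∀ x ∈ Set.Icc (0 : ℝ) 1, 0 < ∑ i ∈ Finset.range (n + 1), a i * x ^ i := by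
  rintro x ⟨hx0, hx1⟩
  rcases eq_or_lt_of_le hx0 with h0 | h0
  · -- x = 0 : the sum is a 0
    have : ∑ i ∈ Finset.range (n + 1), a i * x ^ i = a 0 := by
      rw [Finset.sum_eq_single 0]
      · simp [← h0]
      · intro i hi hne
        simp [← h0, zero_pow hne]
      · simp
    rw [this]
    have := h 0 (Nat.zero_le n)
    simpa using this
  · -- x > 0
    rw [abel_aux]
    have hnn : 0 ≤ ∑ k ∈ Finset.range n,
        (∑ i ∈ Finset.range (k + 1), a i) * (x ^ k - x ^ (k + 1)) := by
      apply Finset.sum_nonneg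
      intro k hk
      have h1 : 0 < ∑ i ∈ Finset.range (k + 1), a i :=
        h k (le_of_lt (Finset.mem_range.mp hk))
      have h2 : x ^ (k + 1) ≤ x ^ k := pow_le_pow_of_le_one hx0 hx1 (Nat.le_succ k)
      nlinarith
    have hpos : 0 < (∑ i ∈ Finset.range (n + 1), a i) * x ^ n :=
      mul_pos (h n le_rfl) (pow_pos h0 n)
    linarith
end

section
/- If P(x) = a_0 + a_1 x + ... + a_n x^n is a real polynomial such that every partial sum A_k = a_0 + ... + a_k is nonnegative, then P(x) ≥ 0 for all x in [0,1]. Moreover, if additionally the total sum A_n = a_0 + ... + a_n is strictly positive, then P(x) > 0 for all x in the open interval (0,1). -/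
lemma wpd_aux (n : ℕ) (a : ℕ → ℝ)
    (h : ∀ k ≤ n, 0 ≤ ∑ i ∈ Finset.range (k + 1), a i)
    (x : ℝ) (hx0 : 0 ≤ x) (hx1 : x ≤ 1) :
    (∑ i ∈ Finset.range (n + 1), a i) * x ^ n ≤
      ∑ i ∈ Finset.range (n + 1), a i * x ^ i := by
  induction n with
  | zero => simp
  | succ m ih =>
    have h' : ∀ k ≤ m, 0 ≤ ∑ i ∈ Finset.range (k + 1), a i :=
      fun k hk => h k (hk.trans (Nat.le_succ m))
    have hA : 0 ≤ ∑ i ∈ Finset.range (m + 1), a i := h m (Nat.le_succ m)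
    have hpow : x ^ (m + 1) ≤ x ^ m := pow_le_pow_of_le_one hx0 hx1 (Nat.le_succ m)
    rw [Finset.sum_range_succ, Finset.sum_range_succ (f := fun i => a i * x ^ i)]
    have step : (∑ i ∈ Finset.range (m + 1), a i) * x ^ (m + 1) ≤
        (∑ i ∈ Finset.range (m + 1), a i) * x ^ m := by
      exact mul_le_mul_of_nonneg_left hpow hA
    nlinarith [ih h']

/-- If every partial sum of the coefficients of `P(x) = a 0 + ... + a n * x ^ n`
is nonnegative (VWPD), then `P ≥ 0` on `[0,1]`; if moreover the total sum is strictly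
positive (WPD), then `P > 0` on `(0,1)`. -/
theorem weak_positive_dominant (n : ℕ) (a : ℕ → ℝ)
    (h : ∀ k ≤ n, 0 ≤ ∑ i ∈ Finset.range (k + 1), a i) :
    (∀ x ∈ Set.Icc (0 : ℝ) 1, 0 ≤ ∑ i ∈ Finset.range (n + 1), a i * x ^ i) ∧
      (0 < ∑ i ∈ Finset.range (n + 1), a i →
        ∀ x ∈ Set.Ioo (0 : ℝ) 1, 0 < ∑ i ∈ Finset.range (n + 1), a i * x ^ i) := by
  constructor
  · intro x hx
    have := wpd_aux n a h x hx.1 hx.2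
    have hA : 0 ≤ ∑ i ∈ Finset.range (n + 1), a i := h n le_rfl
    have : 0 ≤ (∑ i ∈ Finset.range (n + 1), a i) * x ^ n :=
      mul_nonneg hA (pow_nonneg hx.1 n)
    linarith [wpd_aux n a h x hx.1 hx.2]
  · intro hpos x hx
    have := wpd_aux n a h x hx.1.le hx.2.le
    have : 0 < (∑ i ∈ Finset.range (n + 1), a i) * x ^ n :=
      mul_pos hpos (pow_pos hx.1 n)
    linarith [wpd_aux n a h x hx.1.le hx.2.le]
end

section
/- Let P = Σ_I a_I x^I be a real polynomial in k variables x_1,...,x_k, where I ranges over multi-indices. If for every multi-index I the sum Σ_{I' ≤ I} a_{I'} is nonnegative (where I' ≤ I means componentwise inequality), then P(x) ≥ 0 for all x in the closed cube [0,1]^k. -/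
private lemma tele_pow (y : ℝ) {i n : ℕ} (hin : i ≤ n) :
    y ^ i = ∑ m ∈ Finset.Icc i n, (if m = n then y ^ m else y ^ m - y ^ (m + 1)) := by
  rw [← Finset.Ico_insert_right hin, Finset.sum_insert (by simp), if_pos rfl]
  have h1 : ∑ m ∈ Finset.Ico i n, (if m = n then y ^ m else y ^ m - y ^ (m + 1))
      = ∑ m ∈ Finset.Ico i n, (y ^ m - y ^ (m + 1)) :=
    Finset.sum_congr rfl fun m hm => if_neg (Finset.mem_Ico.mp hm).2.ne
  have h2 : ∑ m ∈ Finset.Ico i n, (y ^ (m + 1) - y ^ m) = y ^ n - y ^ i := by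
    rw [Finset.sum_Ico_eq_sub _ hin, Finset.sum_range_sub, Finset.sum_range_sub]; ring
  have h3 : ∑ m ∈ Finset.Ico i n, (y ^ m - y ^ (m + 1))
      = -∑ m ∈ Finset.Ico i n, (y ^ (m + 1) - y ^ m) := by
    rw [← Finset.sum_neg_distrib]; exact Finset.sum_congr rfl fun m _ => by ring
  rw [h1, h3, h2]; ring

/-- Multivariate very weak positive dominance: let `P = ∑_I a_I x^I` be a real polynomial in
`k` variables, given by a finitely supported coefficient function `a` on multi-indices. If for
every multi-index `I` the sum `∑_{I' ≤ I} a I'` (componentwise order) is nonnegative, then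
`P ≥ 0` on the closed cube `[0,1]^k`. -/
theorem multivariate_vwpd_nonneg (k : ℕ) (a : (Fin k → ℕ) →₀ ℝ)
    (h : ∀ I : Fin k → ℕ, 0 ≤ ∑ I' ∈ Finset.Iic I, a I') :
    ∀ x : Fin k → ℝ, (∀ j, x j ∈ Set.Icc (0 : ℝ) 1) →
      0 ≤ ∑ I ∈ a.support, a I * ∏ j, x j ^ I j := by
  intro x hx
  set N : Fin k → ℕ := fun j => a.support.sup fun I => I j with hN
  have hsub : a.support ⊆ Finset.Iic N := by
    intro I hI
    rw [Finset.mem_Iic]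
    intro j
    exact Finset.le_sup (f := fun I => I j) hI
  have step1 : ∑ I ∈ a.support, a I * ∏ j, x j ^ I j
      = ∑ I ∈ Finset.Iic N, a I * ∏ j, x j ^ I j := by
    refine Finset.sum_subset hsub fun I _ hI => ?_
    rw [Finsupp.notMem_support_iff.mp hI, zero_mul]
  set d : Fin k → ℕ → ℝ :=
    fun j m => if m = N j then x j ^ m else x j ^ m - x j ^ (m + 1) with hdd
  have hd : ∀ j m, 0 ≤ d j m := by
    intro j m
    obtain ⟨hx0, hx1⟩ := hx j
    by_cases hm : m = N j
    · simp only [hdd, if_pos hm]; positivity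
    · simp only [hdd, if_neg hm]
      have : x j ^ (m + 1) ≤ x j ^ m := pow_le_pow_of_le_one hx0 hx1 (Nat.le_succ m)
      linarith
  have key : ∀ I ∈ Finset.Iic N, (∏ j, x j ^ I j)
      = ∑ J ∈ Finset.Icc I N, ∏ j, d j (J j) := by
    intro I hI
    rw [Finset.mem_Iic] at hI
    have : ∏ j, x j ^ I j = ∏ j, ∑ m ∈ Finset.Icc (I j) (N j), d j m :=
      Finset.prod_congr rfl fun j _ => tele_pow (x j) (hI j)
    rw [this, Finset.prod_univ_sum, Pi.Icc_eq]
  calc (0:ℝ) ≤ ∑ J ∈ Finset.Iic N, (∑ I ∈ Finset.Iic J, a I) * ∏ j, d j (J j) := by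
        refine Finset.sum_nonneg fun J _ => mul_nonneg (h J)
          (Finset.prod_nonneg fun j _ => hd j (J j))
    _ = ∑ J ∈ Finset.Iic N, ∑ I ∈ Finset.Iic J, a I * ∏ j, d j (J j) := by
        refine Finset.sum_congr rfl fun J _ => ?_
        rw [Finset.sum_mul]
    _ = ∑ I ∈ Finset.Iic N, ∑ J ∈ Finset.Icc I N, a I * ∏ j, d j (J j) := by
        refine (Finset.sum_comm' ?_).symm
        intro I J
        simp only [Finset.mem_Iic, Finset.mem_Icc]
        constructor
        · rintro ⟨_, hIJ, hJN⟩; exact ⟨hIJ, hJN⟩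
        · rintro ⟨hIJ, hJN⟩; exact ⟨hIJ.trans hJN, hIJ, hJN⟩
    _ = ∑ I ∈ Finset.Iic N, a I * ∏ j, x j ^ I j := by
        refine Finset.sum_congr rfl fun I hI => ?_
        rw [← Finset.mul_sum, key I hI]
    _ = ∑ I ∈ a.support, a I * ∏ j, x j ^ I j := step1.symm
end

section
/- Let P = Σ_I a_I x^I be a real polynomial in k variables. If for every multi-index I the sum Σ_{I' ≤ I} a_{I'} is strictly positive, then P(x) > 0 for all x in the closed cube [0,1]^k. -/
lemma tele_aux (x : ℝ) (i N : ℕ) (h : i ≤ N) :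
    ∑ m ∈ Finset.Ico i N, x ^ m * (1 - x) = x ^ i - x ^ N := by
  induction N, h using Nat.le_induction with
  | base => simp
  | succ n hn ih =>
    rw [Finset.sum_Ico_succ_top hn, ih]; ring

lemma tele (x : ℝ) (i N : ℕ) (h : i ≤ N) :
    ∑ m ∈ Finset.Icc i N, (if m = N then x ^ N else x ^ m * (1 - x)) = x ^ i := by
  rw [← Finset.Ico_add_one_right_eq_Icc, Finset.sum_Ico_succ_top (by omega), if_pos rfl]
  rw [Finset.sum_congr rfl (fun m hm => if_neg (by simp at hm; omega)), tele_aux x i N h]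
  ring

/-- Multivariate strong positive dominance: let `P = ∑_I a_I x^I` be a real polynomial in
`k` variables, given by a finitely supported coefficient function `a` on multi-indices. If for
every multi-index `I` the sum `∑_{I' ≤ I} a I'` (componentwise order) is strictly positive,
then `P > 0` on the closed cube `[0,1]^k`. -/
theorem multivariate_spd_pos (k : ℕ) (a : (Fin k → ℕ) →₀ ℝ)
    (h : ∀ I : Fin k → ℕ, 0 < ∑ I' ∈ Finset.Iic I, a I') :
    ∀ x : Fin k → ℝ, (∀ j, x j ∈ Set.Icc (0 : ℝ) 1) →
      0 < ∑ I ∈ a.support, a I * ∏ j, x j ^ I j := by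
  classical
  intro x hx
  set N : Fin k → ℕ := a.support.sup id with hN
  have hsub : a.support ⊆ Finset.Iic N :=
    fun I hI => Finset.mem_Iic.mpr (Finset.le_sup (f := id) hI)
  rw [Finset.sum_subset hsub (fun I _ hI => by
    simp [Finsupp.notMem_support_iff.mp hI])]
  set w : (Fin k → ℕ) → ℝ :=
    fun I => ∏ j, (if I j = N j then x j ^ N j else x j ^ I j * (1 - x j)) with hw
  have hx0 : ∀ j, 0 ≤ x j := fun j => (hx j).1
  have hx1 : ∀ j, x j ≤ 1 := fun j => (hx j).2
  have hwnn : ∀ I, 0 ≤ w I := by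
    intro I
    apply Finset.prod_nonneg
    intro j _
    have h0 := hx0 j; have h1 := hx1 j
    split
    · positivity
    · have : (0:ℝ) ≤ 1 - x j := by linarith
      positivity
  have key : ∀ I' ∈ Finset.Iic N, ∑ I ∈ Finset.Icc I' N, w I = ∏ j, x j ^ I' j := by
    intro I' hI'
    have e := Finset.prod_univ_sum (fun j => Finset.Icc (I' j) (N j))
      (fun j m => if m = N j then x j ^ N j else x j ^ m * (1 - x j))
    rw [Pi.Icc_eq]
    exact e.symm.trans (Finset.prod_congr rfl fun j _ =>
      tele (x j) (I' j) (N j) ((Finset.mem_Iic.mp hI') j))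
  have expand : ∑ I ∈ Finset.Iic N, a I * ∏ j, x j ^ I j
      = ∑ I ∈ Finset.Iic N, (∑ I' ∈ Finset.Iic I, a I') * w I := by
    calc ∑ I ∈ Finset.Iic N, a I * ∏ j, x j ^ I j
        = ∑ I' ∈ Finset.Iic N, a I' * ∑ I ∈ Finset.Icc I' N, w I := by
          exact Finset.sum_congr rfl fun I' hI' => by rw [key I' hI']
      _ = ∑ I' ∈ Finset.Iic N, ∑ I ∈ Finset.Iic N, (if I' ≤ I then a I' * w I else 0) := by
          refine Finset.sum_congr rfl fun I' hI' => ?_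
          rw [Finset.mul_sum, ← Finset.sum_filter]
          apply Finset.sum_congr _ (fun _ _ => rfl)
          ext I
          simp only [Finset.mem_Icc, Finset.mem_filter, Finset.mem_Iic]
          tauto
      _ = ∑ I ∈ Finset.Iic N, ∑ I' ∈ Finset.Iic N, (if I' ≤ I then a I' * w I else 0) :=
          Finset.sum_comm
      _ = ∑ I ∈ Finset.Iic N, (∑ I' ∈ Finset.Iic I, a I') * w I := by
          refine Finset.sum_congr rfl fun I hI => ?_
          rw [← Finset.sum_filter, Finset.sum_mul]
          apply Finset.sum_congr _ (fun _ _ => rfl)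
          ext I'
          simp only [Finset.mem_filter, Finset.mem_Iic]
          exact ⟨fun ⟨_, h2⟩ => h2, fun h2 => ⟨le_trans h2 (Finset.mem_Iic.mp hI), h2⟩⟩
  rw [expand]
  have hw1 : ∑ I ∈ Finset.Iic N, w I = 1 := by
    have hk := key 0 (Finset.mem_Iic.mpr (by intro j; exact Nat.zero_le _))
    have : Finset.Icc (0 : Fin k → ℕ) N = Finset.Iic N := by
      ext I; simp [Finset.mem_Icc, Finset.mem_Iic]
    rw [this] at hk
    simpa using hk
  have hex : ∃ I ∈ Finset.Iic N, 0 < w I := by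
    by_contra hc
    push_neg at hc
    have : ∑ I ∈ Finset.Iic N, w I ≤ 0 := Finset.sum_nonpos hc
    linarith
  obtain ⟨I, hI, hwI⟩ := hex
  refine Finset.sum_pos' (fun I _ => mul_nonneg (le_of_lt (h I)) (hwnn I)) ⟨I, hI, mul_pos (h I) hwI⟩
end

section
/- For all x_1,x_2,x_3,x_4 ∈ (0,1) and λ > 0, the determinant of the 3×3 matrix whose rows are the homogeneous coordinate vectors B_3 = (λ, 0, 1), B_5 = (λx_1x_2 − x_1x_2 − λx_2 + 1, λx_1x_2 − x_1x_2 + λx_2 + 1, λx_1x_2 − x_1x_2 − λx_2 − 1), and B_7 = (x_1x_2 − λx_2x_3x_4 + x_2x_3x_4 − x_2 − λx_4 − 1, x_1x_2 + λx_2x_3x_4 − x_2x_3x_4 + x_2 − λx_4 − 1, x_1x_2 − λx_2x_3x_4 + x_2x_3x_4 − x_2 + λx_4 + 1) is strictly positive; in particular the three points B_3, B_5, B_7 in the real projective plane are not collinear. -/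
/-- The determinant of the matrix of homogeneous coordinates of three consecutive vertices
`B₃, B₅, B₇` of the image of a convex polygon under the heat map `H_λ` is strictly positive
for flag invariants in `(0,1)` and `λ > 0`; in particular `B₃, B₅, B₇` are linearly
independent, i.e. the three points of the real projective plane are not collinear. -/
theorem heat_map_consecutive_not_collinear (x₁ x₂ x₃ x₄ lam : ℝ)
    (h₁ : x₁ ∈ Set.Ioo (0 : ℝ) 1) (h₂ : x₂ ∈ Set.Ioo (0 : ℝ) 1)
    (h₃ : x₃ ∈ Set.Ioo (0 : ℝ) 1) (h₄ : x₄ ∈ Set.Ioo (0 : ℝ) 1) (hlam : 0 < lam) :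
    0 < Matrix.det !![lam, 0, 1;
        lam * x₁ * x₂ - x₁ * x₂ - lam * x₂ + 1,
        lam * x₁ * x₂ - x₁ * x₂ + lam * x₂ + 1,
        lam * x₁ * x₂ - x₁ * x₂ - lam * x₂ - 1;
        x₁ * x₂ - lam * x₂ * x₃ * x₄ + x₂ * x₃ * x₄ - x₂ - lam * x₄ - 1,
        x₁ * x₂ + lam * x₂ * x₃ * x₄ - x₂ * x₃ * x₄ + x₂ - lam * x₄ - 1,
        x₁ * x₂ - lam * x₂ * x₃ * x₄ + x₂ * x₃ * x₄ - x₂ + lam * x₄ + 1] ∧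
      LinearIndependent ℝ
        ![![lam, 0, 1],
          ![lam * x₁ * x₂ - x₁ * x₂ - lam * x₂ + 1,
            lam * x₁ * x₂ - x₁ * x₂ + lam * x₂ + 1,
            lam * x₁ * x₂ - x₁ * x₂ - lam * x₂ - 1],
          ![x₁ * x₂ - lam * x₂ * x₃ * x₄ + x₂ * x₃ * x₄ - x₂ - lam * x₄ - 1,
            x₁ * x₂ + lam * x₂ * x₃ * x₄ - x₂ * x₃ * x₄ + x₂ - lam * x₄ - 1,
            x₁ * x₂ - lam * x₂ * x₃ * x₄ + x₂ * x₃ * x₄ - x₂ + lam * x₄ + 1]] := by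
  obtain ⟨a₁, b₁⟩ := h₁
  obtain ⟨a₂, b₂⟩ := h₂
  obtain ⟨a₃, b₃⟩ := h₃
  obtain ⟨a₄, b₄⟩ := h₄
  have hdet : Matrix.det !![lam, 0, 1;
        lam * x₁ * x₂ - x₁ * x₂ - lam * x₂ + 1,
        lam * x₁ * x₂ - x₁ * x₂ + lam * x₂ + 1,
        lam * x₁ * x₂ - x₁ * x₂ - lam * x₂ - 1;
        x₁ * x₂ - lam * x₂ * x₃ * x₄ + x₂ * x₃ * x₄ - x₂ - lam * x₄ - 1,
        x₁ * x₂ + lam * x₂ * x₃ * x₄ - x₂ * x₃ * x₄ + x₂ - lam * x₄ - 1,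
        x₁ * x₂ - lam * x₂ * x₃ * x₄ + x₂ * x₃ * x₄ - x₂ + lam * x₄ + 1] =
      2 * x₂ * ((1 - x₁ * x₂) * (1 - x₃ * x₄)
        + lam * (1 + x₃ * x₄ + x₁ * x₂ - 3 * (x₁ * x₂ * (x₃ * x₄)))
        + lam ^ 2 * (x₄ + x₁ * (1 - x₄) + 3 * (x₁ * x₂ * (x₃ * x₄)))
        + lam ^ 3 * (x₁ * x₄ * (1 - x₂ * x₃))) := by
    rw [Matrix.det_fin_three]
    simp [Matrix.cons_val_zero, Matrix.cons_val_one]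
    ring
  have hp : x₁ * x₂ < 1 := by nlinarith [mul_pos a₂ (sub_pos.mpr b₁)]
  have hs : x₃ * x₄ < 1 := by nlinarith [mul_pos a₄ (sub_pos.mpr b₃)]
  have hq : x₂ * x₃ < 1 := by nlinarith [mul_pos a₃ (sub_pos.mpr b₂)]
  have hc0 : 0 < (1 - x₁ * x₂) * (1 - x₃ * x₄) :=
    mul_pos (by linarith) (by linarith)
  have hc1 : 0 < 1 + x₃ * x₄ + x₁ * x₂ - 3 * (x₁ * x₂ * (x₃ * x₄)) := by
    nlinarith [mul_pos (mul_pos a₁ a₂) (sub_pos.mpr hs),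
      mul_pos (mul_pos a₃ a₄) (sub_pos.mpr hp)]
  have hc2 : 0 < x₄ + x₁ * (1 - x₄) + 3 * (x₁ * x₂ * (x₃ * x₄)) := by
    nlinarith [mul_pos (mul_pos a₁ a₂) (mul_pos a₃ a₄), mul_pos a₁ (sub_pos.mpr b₄)]
  have hc3 : 0 < x₁ * x₄ * (1 - x₂ * x₃) :=
    mul_pos (mul_pos a₁ a₄) (by linarith)
  have hpos : 0 < Matrix.det !![lam, 0, 1;
        lam * x₁ * x₂ - x₁ * x₂ - lam * x₂ + 1,
        lam * x₁ * x₂ - x₁ * x₂ + lam * x₂ + 1,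
        lam * x₁ * x₂ - x₁ * x₂ - lam * x₂ - 1;
        x₁ * x₂ - lam * x₂ * x₃ * x₄ + x₂ * x₃ * x₄ - x₂ - lam * x₄ - 1,
        x₁ * x₂ + lam * x₂ * x₃ * x₄ - x₂ * x₃ * x₄ + x₂ - lam * x₄ - 1,
        x₁ * x₂ - lam * x₂ * x₃ * x₄ + x₂ * x₃ * x₄ - x₂ + lam * x₄ + 1] := by
    rw [hdet]
    have := mul_pos hlam hc1
    have := mul_pos (pow_pos hlam 2) hc2
    have := mul_pos (pow_pos hlam 3) hc3
    nlinarith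
  refine ⟨hpos, ?_⟩
  have : IsUnit !![lam, 0, 1;
        lam * x₁ * x₂ - x₁ * x₂ - lam * x₂ + 1,
        lam * x₁ * x₂ - x₁ * x₂ + lam * x₂ + 1,
        lam * x₁ * x₂ - x₁ * x₂ - lam * x₂ - 1;
        x₁ * x₂ - lam * x₂ * x₃ * x₄ + x₂ * x₃ * x₄ - x₂ - lam * x₄ - 1,
        x₁ * x₂ + lam * x₂ * x₃ * x₄ - x₂ * x₃ * x₄ + x₂ - lam * x₄ - 1,
        x₁ * x₂ - lam * x₂ * x₃ * x₄ + x₂ * x₃ * x₄ - x₂ + lam * x₄ + 1] := by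
    rw [Matrix.isUnit_iff_isUnit_det, isUnit_iff_ne_zero]
    exact ne_of_gt hpos
  exact Matrix.linearIndependent_rows_iff_isUnit.mpr this
end

section
/- The group generated by G(x,y) = (y, (1−x)/(1−xy)) and the reflection R(x,y) = (y,x), acting as birational transformations of the plane, is a dihedral group of order 10; in particular R∘G∘R = G^{-1} and G has order 5 while R has order 2. -/
/-!
Write `s = 1 - x y`. Starting from `(x, y)`, the Gauss recurrence runs through the pentagon
`x, y, (1 - x)/s, s, (1 - y)/s, x, y`, each step being the relation `c (1 - a b) = 1 - a` between
consecutive terms `a, b, c`, which is checked by clearing the single denominator `s`. The reflection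
reverses the pentagon: `R G R (x, y) = ((1 - y)/s, x)` is the point preceding `(x, y)`.
-/

namespace Gauss

variable {K : Type*} [Field K]

def gauss (p : K × K) : K × K := (p.2, (1 - p.1) / (1 - p.1 * p.2))

theorem gauss_mk_eq_iff {a b c : K} (h : a * b ≠ 1) :
    gauss (a, b) = (b, c) ↔ c * (1 - a * b) = 1 - a := by
  simp only [gauss, Prod.mk.injEq, true_and]
  rw [eq_comm, eq_div_iff (sub_ne_zero.2 h.symm)]

theorem gauss_iterate_succ_eq {n : ℕ} {p : K × K} {a b : K} (c : K)
    (hn : gauss^[n] p = (a, b)) (hab : a * b ≠ 1) (hc : c * (1 - a * b) = 1 - a) :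
    gauss^[n + 1] p = (b, c) := by
  rw [Function.iterate_succ_apply', hn, gauss_mk_eq_iff hab]
  exact hc

theorem gauss_mk_div_eq {x y s : K} (hd : 1 - x * y = s) (hs : s ≠ 0)
    (h : (1 - y) / s * x ≠ 1) : gauss ((1 - y) / s, x) = (x, y) := by
  rw [gauss_mk_eq_iff h]
  field_simp
  subst hd
  ring

theorem gauss_iterate_five {p : K × K}
    (h : ∀ i < 5, (gauss^[i] p).1 * (gauss^[i] p).2 ≠ 1) : gauss^[5] p = p := by
  obtain ⟨x, y⟩ := p
  have hs : 1 - x * y ≠ 0 := sub_ne_zero.2 (h 0 (by norm_num)).symm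
  -- naming the denominator lets `field_simp` see it as a single nonzero atom
  generalize hd : 1 - x * y = s at hs
  have h1 : gauss^[1] (x, y) = (y, (1 - x) / s) :=
    gauss_iterate_succ_eq _ rfl (h 0 (by norm_num)) (by rw [hd]; exact div_mul_cancel₀ _ hs)
  have h2 : gauss^[2] (x, y) = ((1 - x) / s, s) :=
    gauss_iterate_succ_eq _ h1 (by simpa only [h1] using h 1 (by norm_num))
      (by field_simp; subst hd; ring)
  have h3 : gauss^[3] (x, y) = (s, (1 - y) / s) :=
    gauss_iterate_succ_eq _ h2 (by simpa only [h2] using h 2 (by norm_num))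
      (by field_simp; subst hd; ring)
  have h4 : gauss^[4] (x, y) = ((1 - y) / s, x) :=
    gauss_iterate_succ_eq _ h3 (by simpa only [h3] using h 3 (by norm_num))
      (by field_simp; subst hd; ring)
  rw [Function.iterate_succ_apply', h4]
  exact gauss_mk_div_eq hd hs (by simpa only [h4] using h 4 (by norm_num))

theorem swap_gauss_swap (p : K × K) :
    (gauss p.swap).swap = ((1 - p.2) / (1 - p.1 * p.2), p.1) := by
  simp [gauss, mul_comm]

theorem gauss_swap_gauss_swap {p : K × K} (hp : p.1 * p.2 ≠ 1)
    (h : (gauss p.swap).swap.1 * (gauss p.swap).swap.2 ≠ 1) :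
    gauss (gauss p.swap).swap = p := by
  rw [swap_gauss_swap] at h ⊢
  exact gauss_mk_div_eq rfl (sub_ne_zero.2 hp.symm) h

end Gauss

open Gauss in
/-- The Gauss recurrence `G(x,y) = (y, (1−x)/(1−xy))` and the reflection `R(x,y) = (y,x)`
generate a dihedral group of order 10 of birational transformations: `R` has order 2,
`G` has order 5 (it is not the identity but `G⁵ = id` wherever defined), and
`R ∘ G ∘ R = G⁻¹`, i.e. `G ∘ (R ∘ G ∘ R) = id` wherever defined. -/
theorem gauss_group_dihedral
    (G R : ℝ × ℝ → ℝ × ℝ)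
    (hG : ∀ p : ℝ × ℝ, G p = (p.2, (1 - p.1) / (1 - p.1 * p.2)))
    (hR : ∀ p : ℝ × ℝ, R p = (p.2, p.1)) :
    -- R has order 2
    (∀ p : ℝ × ℝ, R (R p) = p) ∧ R ≠ id ∧
    -- G has order 5 wherever defined, and G is not the identity
    (∀ p : ℝ × ℝ, (∀ i < 5, (G^[i] p).1 * (G^[i] p).2 ≠ 1) → G^[5] p = p) ∧ G ≠ id ∧
    -- R ∘ G ∘ R = G⁻¹ : composing with G gives the identity wherever defined
    (∀ p : ℝ × ℝ, p.1 * p.2 ≠ 1 → (R (G (R p))).1 * (R (G (R p))).2 ≠ 1 →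
      G (R (G (R p))) = p) := by
  obtain rfl : G = gauss := funext hG
  obtain rfl : R = Prod.swap := funext hR
  refine ⟨Prod.swap_swap, fun h => ?_, fun _ => gauss_iterate_five, fun h => ?_,
    fun _ => gauss_swap_gauss_swap⟩
  · simpa using congrArg Prod.fst (congrFun h (0, 1))
  · simpa [gauss] using congrArg Prod.snd (congrFun h (0, 0))
end

section
/- Define E(x,y) = xy(1−x)(1−y)/(1−xy) for (x,y) ∈ (0,1)². Then E is invariant under the Gauss recurrence: E(G(x,y)) = E(x,y) for all (x,y) ∈ (0,1)², where G(x,y) = (y, (1−x)/(1−xy)). E is also invariant under the swap (x,y) ↦ (y,x). -/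
/-!
With `z = (1 - x)/(1 - xy)` both factors of `E(y, z)` that involve `z` split off a factor
`1/(1 - xy)`: `1 - z = x(1 - y)/(1 - xy)` and `1 - yz = (1 - y)/(1 - xy)`. Substituting,
the factor `1 - y` of the new denominator cancels and `E(y, z)` collapses to `E(x, y)`.
-/

variable {K : Type*} [Field K] {x y : K}

def energy (x y : K) : K := x * y * (1 - x) * (1 - y) / (1 - x * y)

def gaussNext (x y : K) : K := (1 - x) / (1 - x * y)

theorem energy_swap (x y : K) : energy y x = energy x y := by
  unfold energy
  ring

theorem one_sub_gaussNext (hxy : x * y ≠ 1) :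
    1 - gaussNext x y = x * (1 - y) / (1 - x * y) := by
  have : 1 - x * y ≠ 0 := sub_ne_zero.mpr hxy.symm
  unfold gaussNext
  field_simp
  ring

theorem one_sub_mul_gaussNext (hxy : x * y ≠ 1) :
    1 - y * gaussNext x y = (1 - y) / (1 - x * y) := by
  have : 1 - x * y ≠ 0 := sub_ne_zero.mpr hxy.symm
  rw [eq_div_iff this, sub_mul, gaussNext, mul_assoc, div_mul_cancel₀ _ this]
  ring

theorem energy_gaussNext (hxy : x * y ≠ 1) (hy : y ≠ 1) :
    energy y (gaussNext x y) = energy x y := by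
  have hxy' : 1 - x * y ≠ 0 := sub_ne_zero.mpr hxy.symm
  have hy' : 1 - y ≠ 0 := sub_ne_zero.mpr hy.symm
  rw [energy, one_sub_gaussNext hxy, one_sub_mul_gaussNext hxy, energy, gaussNext]
  field_simp

/-- The energy `E(x,y) = xy(1−x)(1−y)/(1−xy)` on `(0,1)²` is invariant under the Gauss
recurrence `G(x,y) = (y, (1−x)/(1−xy))` and under the coordinate swap. -/
theorem energy_gauss_invariant
    (E : ℝ → ℝ → ℝ) (hE : ∀ x y : ℝ, E x y = x * y * (1 - x) * (1 - y) / (1 - x * y)) :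
    ∀ x y : ℝ, x ∈ Set.Ioo (0 : ℝ) 1 → y ∈ Set.Ioo (0 : ℝ) 1 →
      E y ((1 - x) / (1 - x * y)) = E x y ∧ E y x = E x y := by
  obtain rfl : E = energy := funext fun x => funext fun y => hE x y
  rintro x y ⟨hx0, hx1⟩ ⟨-, hy1⟩
  have hxy : x * y ≠ 1 := (mul_lt_one_of_nonneg_of_lt_one_left hx0.le hx1 hy1.le).ne
  exact ⟨energy_gaussNext hxy hy1.ne, energy_swap x y⟩
end

section
/- Let K_1 ⊃ K_2 ⊃ K_3 ⊃ ... be a nested sequence of compact convex subsets of the plane, with each K_{n+1} contained in the interior of K_n. If there exists a uniform constant C such that the diameter of K_{n+1} with respect to the Hilbert metric of K_n is at most C for all n, then the intersection ∩_n K_n consists of a single point. -/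
open Metric

variable {E : Type*} [NormedAddCommGroup E] [NormedSpace ℝ E]

lemma chord_lemma {Kn : Set E} (hK : IsCompact Kn) (hKc : Convex ℝ Kn)
    {b c : E} (hb : b ∈ interior Kn) (hc : c ∈ interior Kn) (hbc : b ≠ c) :
    ∃ (a d : E) (s t : ℝ), a ∈ frontier Kn ∧ d ∈ frontier Kn ∧
      0 < s ∧ s < t ∧ t < 1 ∧ b = a + s • (d - a) ∧ c = a + t • (d - a) ∧
      dist b c = (t - s) * dist a d := by
  set v := c - b with hv
  have hvne : v ≠ 0 := sub_ne_zero.2 (Ne.symm hbc)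
  have hvpos : 0 < ‖v‖ := norm_pos_iff.2 hvne
  set f : ℝ → E := fun r => b + r • v with hf
  have hdiff : ∀ r w : ℝ, f r - f w = (r - w) • v := by
    intro r w; simp only [hf]; module
  have hnormdiff : ∀ r w : ℝ, ‖f r - f w‖ = |r - w| * ‖v‖ := by
    intro r w; rw [hdiff, norm_smul, Real.norm_eq_abs]
  set S : Set ℝ := {r | f r ∈ Kn} with hS
  have hSconv : Convex ℝ S := by
    intro x hx y hy p q hp hq hpq
    have h1 := hKc hx hy hp hq hpq
    have heq : p • f x + q • f y = (p + q) • b + (p * x + q * y) • v := by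
      simp only [hf]; module
    rw [hpq, one_smul] at heq
    simpa [hS, Set.mem_setOf_eq, hf, ← heq] using h1
  have hfc : Continuous f := by
    simp only [hf]; exact continuous_const.add (continuous_id.smul continuous_const)
  have hSclosed : IsClosed S := hK.isClosed.preimage hfc
  obtain ⟨M, hM⟩ := hK.isBounded.subset_closedBall b
  have hf0 : f 0 = b := by simp [hf]
  have hf1 : f 1 = c := by simp [hf, hv]
  have hSbdd : S ⊆ Set.Icc (-(M / ‖v‖)) (M / ‖v‖) := by
    intro r hr
    have h2 : ‖f r - f 0‖ ≤ M := by
      rw [hf0, ← dist_eq_norm]; exact hM hr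
    rw [hnormdiff, sub_zero] at h2
    have h4 : |r| ≤ M / ‖v‖ := (le_div_iff₀ hvpos).2 h2
    exact abs_le.1 h4
  have hbb : BddBelow S := ⟨_, fun x hx => (hSbdd hx).1⟩
  have hba : BddAbove S := ⟨_, fun x hx => (hSbdd hx).2⟩
  have h0S : (0 : ℝ) ∈ S := by simp only [hS, Set.mem_setOf_eq, hf0]; exact interior_subset hb
  have h1S : (1 : ℝ) ∈ S := by simp only [hS, Set.mem_setOf_eq, hf1]; exact interior_subset hc
  have hSne : S.Nonempty := ⟨0, h0S⟩
  set α := sInf S with hα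
  set β := sSup S with hβ
  have hαS : α ∈ S := hSclosed.csInf_mem hSne hbb
  have hβS : β ∈ S := hSclosed.csSup_mem hSne hba
  -- generic near-point lemma
  have hnear : ∀ w : ℝ, f w ∈ interior Kn → ∃ ε > 0, ∀ r : ℝ, |r - w| = ε / (2 * ‖v‖) → r ∈ S := by
    intro w hw
    obtain ⟨ε, hε, hball⟩ := Metric.mem_nhds_iff.1 (mem_interior_iff_mem_nhds.1 hw)
    refine ⟨ε, hε, fun r hr => ?_⟩
    apply hball
    rw [Metric.mem_ball, dist_eq_norm, hnormdiff, hr, div_mul_eq_mul_div,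
      div_lt_iff₀ (by positivity)]
    nlinarith
  have hq : (0:ℝ) < 1 / (2 * ‖v‖) := by positivity
  have hαneg : α < 0 := by
    obtain ⟨ε, hε, hmem⟩ := hnear 0 (by rwa [hf0])
    have h1 : (-(ε / (2 * ‖v‖))) ∈ S := hmem _ (by rw [sub_zero, abs_neg, abs_of_pos (by positivity)])
    have h2 := csInf_le hbb h1
    have : 0 < ε / (2 * ‖v‖) := by positivity
    linarith
  have hβgt : 1 < β := by
    obtain ⟨ε, hε, hmem⟩ := hnear 1 (by rwa [hf1])
    have h1 : (1 + ε / (2 * ‖v‖)) ∈ S := hmem _ (by rw [add_sub_cancel_left, abs_of_pos (by positivity)])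
    have h2 := le_csSup hba h1
    have : 0 < ε / (2 * ‖v‖) := by positivity
    linarith
  have hβα : 0 < β - α := by linarith
  have hαfr : f α ∈ frontier Kn := by
    rw [hK.isClosed.frontier_eq]
    refine ⟨hαS, fun hint => ?_⟩
    obtain ⟨ε, hε, hmem⟩ := hnear α hint
    have h1 : (α - ε / (2 * ‖v‖)) ∈ S := hmem _ (by rw [sub_sub_cancel_left, abs_neg, abs_of_pos (by positivity)])
    have h2 := csInf_le hbb h1
    have : 0 < ε / (2 * ‖v‖) := by positivity
    linarith
  have hβfr : f β ∈ frontier Kn := by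
    rw [hK.isClosed.frontier_eq]
    refine ⟨hβS, fun hint => ?_⟩
    obtain ⟨ε, hε, hmem⟩ := hnear β hint
    have h1 : (β + ε / (2 * ‖v‖)) ∈ S := hmem _ (by rw [add_sub_cancel_left, abs_of_pos (by positivity)])
    have h2 := le_csSup hba h1
    have : 0 < ε / (2 * ‖v‖) := by positivity
    linarith
  refine ⟨f α, f β, -α / (β - α), (1 - α) / (β - α), hαfr, hβfr,
    div_pos (by linarith) hβα, by rw [div_lt_div_iff_of_pos_right hβα]; linarith,
    (div_lt_one hβα).2 (by linarith), ?_, ?_, ?_⟩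
  · rw [hdiff β α, smul_smul, div_mul_cancel₀ _ (ne_of_gt hβα)]
    simp only [hf]; module
  · rw [hdiff β α, smul_smul, div_mul_cancel₀ _ (ne_of_gt hβα)]
    simp only [hf, hv]
    try module
  · rw [dist_eq_norm, dist_eq_norm, hnormdiff, abs_of_neg (by linarith : α - β < 0)]
    have : ‖b - c‖ = ‖v‖ := by rw [hv, norm_sub_rev]
    rw [this]
    field_simp
    try ring

lemma key_ineq (u s t : ℝ) (hu : 1 ≤ u) (hs : 0 < s) (hst : s < t) (ht : t < 1)
    (h : t * (1 - s) ≤ u ^ 2 * (s * (1 - t))) : (t - s) * (u + 1) ≤ u - 1 := by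
  by_contra hc
  push_neg at hc
  set δ := t - s with hδ
  have hu2 : 0 ≤ u^2 - 1 := by nlinarith
  have ha : δ ≤ (u^2 - 1) * (s * (1 - t)) := by nlinarith
  have hb : 4 * (s * (1 - t)) ≤ (1 - δ)^2 := by nlinarith [sq_nonneg (s - (1 - t))]
  have h1 : 4 * δ ≤ (u^2 - 1) * (1 - δ)^2 := by
    nlinarith [mul_le_mul_of_nonneg_left hb hu2]
  have h2 : (u + 1) * (1 - δ) < 2 := by nlinarith
  have h3 : 0 ≤ (u + 1) * (1 - δ) := by nlinarith
  have h4 : ((u + 1) * (1 - δ))^2 < 4 := by nlinarith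
  nlinarith [sq_nonneg (u - 1)]


/-- Lemma on nested convex sets and the Hilbert metric: let `K₁ ⊃ K₂ ⊃ ⋯` be a nested
sequence of compact convex domains of the plane, each `K (n+1)` contained in the interior of
`K n`. Suppose there is a uniform constant `C` bounding the Hilbert-metric diameter of
`K (n+1)` inside `K n`: whenever `b, c ∈ K (n+1)` lie on a chord of `K n` with endpoints
`a, d ∈ ∂(K n)`, parametrized so that `b = a + s•(d−a)`, `c = a + t•(d−a)` with
`0 < s < t < 1`, the Hilbert distance `d_{K n}(b,c) = −log [a,b,c,d] = −log (s(1−t)/(t(1−s)))`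
is at most `C`. Then `⋂ n, K n` is a single point. -/
theorem hilbert_nested_intersection_singleton
    (K : ℕ → Set (EuclideanSpace ℝ (Fin 2)))
    (hcompact : ∀ n, IsCompact (K n))
    (hconvex : ∀ n, Convex ℝ (K n))
    (hne : ∀ n, (interior (K n)).Nonempty)
    (hnested : ∀ n, K (n + 1) ⊆ interior (K n))
    (C : ℝ)
    (hdiam : ∀ n, ∀ b ∈ K (n + 1), ∀ c ∈ K (n + 1),
      ∀ (a d : EuclideanSpace ℝ (Fin 2)), a ∈ frontier (K n) → d ∈ frontier (K n) →
      ∀ s t : ℝ, 0 < s → s < t → t < 1 →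
      b = a + s • (d - a) → c = a + t • (d - a) →
      -Real.log (s * (1 - t) / (t * (1 - s))) ≤ C) :
    ∃ p, ⋂ n, K n = {p} := by
  set Mx := max C 0 with hMx
  set u := Real.exp (Mx / 2) with hu'
  have hu : 1 ≤ u := Real.one_le_exp (by positivity)
  set ρ := (u - 1) / (u + 1) with hρ
  have hup : (0:ℝ) < u + 1 := by linarith
  have hρ0 : 0 ≤ ρ := div_nonneg (by linarith) (by linarith)
  have hρ1 : ρ < 1 := (div_lt_one hup).2 (by linarith)
  have step : ∀ n, ∀ b ∈ K (n + 1), ∀ c ∈ K (n + 1), dist b c ≤ ρ * diam (K n) := by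
    intro n b hb c hc
    by_cases hbc : b = c
    · subst hbc; simp only [dist_self]
      exact mul_nonneg hρ0 diam_nonneg
    · obtain ⟨a, d, s, t, ha, hd, hs, hst, ht, hbe, hce, hdist⟩ :=
        chord_lemma (hcompact n) (hconvex n) (hnested n hb) (hnested n hc) hbc
      have hC := hdiam n b hb c hc a d ha hd s t hs hst ht hbe hce
      have ht0 : 0 < t := lt_trans hs hst
      have h1t : 0 < 1 - t := by linarith
      have h1s : 0 < 1 - s := by linarith
      have hx : 0 < s * (1 - t) / (t * (1 - s)) := by positivity
      have hlog : -Mx ≤ Real.log (s * (1 - t) / (t * (1 - s))) := by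
        have : C ≤ Mx := le_max_left _ _
        linarith
      have h5 : Real.exp (-Mx) ≤ s * (1 - t) / (t * (1 - s)) := by
        calc Real.exp (-Mx) ≤ Real.exp (Real.log (s * (1 - t) / (t * (1 - s)))) :=
              Real.exp_le_exp.2 hlog
          _ = _ := Real.exp_log hx
      have hts : 0 < t * (1 - s) := by positivity
      have h6 : Real.exp (-Mx) * (t * (1 - s)) ≤ s * (1 - t) := (le_div_iff₀ hts).1 h5
      have h7 : t * (1 - s) ≤ u ^ 2 * (s * (1 - t)) := by
        have hu2 : u ^ 2 = Real.exp Mx := by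
          rw [sq, hu', ← Real.exp_add]; ring_nf
        have h8 := mul_le_mul_of_nonneg_left h6 (le_of_lt (Real.exp_pos Mx))
        rw [← mul_assoc, ← Real.exp_add, add_neg_cancel, Real.exp_zero, one_mul] at h8
        rw [hu2]; exact h8
      have h9 : t - s ≤ ρ := by
        rw [hρ, le_div_iff₀ hup]
        exact key_ineq u s t hu hs hst ht h7
      have had : dist a d ≤ diam (K n) :=
        dist_le_diam_of_mem (hcompact n).isBounded
          ((hcompact n).isClosed.frontier_subset ha)
          ((hcompact n).isClosed.frontier_subset hd)
      calc dist b c = (t - s) * dist a d := hdist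
        _ ≤ ρ * dist a d := mul_le_mul_of_nonneg_right h9 dist_nonneg
        _ ≤ ρ * diam (K n) := mul_le_mul_of_nonneg_left had hρ0
  have hdiamstep : ∀ n, diam (K (n + 1)) ≤ ρ * diam (K n) := fun n =>
    diam_le_of_forall_dist_le (mul_nonneg hρ0 diam_nonneg) (step n)
  have hgeom : ∀ n, diam (K n) ≤ ρ ^ n * diam (K 0) := by
    intro n
    induction n with
    | zero => simp
    | succ n ih =>
      calc diam (K (n + 1)) ≤ ρ * diam (K n) := hdiamstep n
        _ ≤ ρ * (ρ ^ n * diam (K 0)) := mul_le_mul_of_nonneg_left ih hρ0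
        _ = ρ ^ (n + 1) * diam (K 0) := by ring
  have htend : Filter.Tendsto (fun n => diam (K n)) Filter.atTop (nhds 0) := by
    apply squeeze_zero (fun n => diam_nonneg) hgeom
    have := (tendsto_pow_atTop_nhds_zero_of_lt_one hρ0 hρ1).mul_const (diam (K 0))
    simpa using this
  have hKne : ∀ n, (K n).Nonempty := fun n => (hne n).mono interior_subset
  have hsub : ∀ n, K (n + 1) ⊆ K n := fun n => (hnested n).trans interior_subset
  obtain ⟨p, hp⟩ := IsCompact.nonempty_iInter_of_sequence_nonempty_isCompact_isClosed K
    hsub hKne (hcompact 0) (fun n => (hcompact n).isClosed)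
  refine ⟨p, ?_⟩
  ext x
  simp only [Set.mem_iInter, Set.mem_singleton_iff]
  constructor
  · intro hx
    have hd : ∀ n, dist x p ≤ diam (K n) := fun n =>
      dist_le_diam_of_mem (hcompact n).isBounded (hx n) (Set.mem_iInter.1 hp n)
    have : dist x p ≤ 0 := ge_of_tendsto' htend hd
    exact dist_le_zero.1 this
  · intro h
    subst h
    exact Set.mem_iInter.1 hp
end
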